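/- Let $N$ be a finitely generated module over $A_R=\mathbb{C}[u,t][[q]]/(ut-q)$ with a connection $D_N$ along $t\partial_t - u\partial_u$, and let $N_0 = \{x \in N : (t-1)^n x = 0 \text{ for some } n\geq 0\}$. Then $N_0$ is a submodule invariant under $D_N$, and applying $D_N$ to the relation $(t-1)^{n_0}N_0 = 0$ for minimal $n_0$ forces $n_0 = 0$, i.e. $N_0 = 0$. -/

import Mathlib

set_option synthInstance.maxHeartbeats 1000000
set_option maxHeartbeats 1000000

noncomputable section

/-- Polynomials `ℂ[u,t]` with `u = X 0`, `t = X 1`. -/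
abbrev Pol2 : Type := MvPolynomial (Fin 2) ℂ

/-- The ring `A_R = ℂ[u,t][[q]]/(ut - q)`. -/
abbrev ARing : Type :=
  (PowerSeries Pol2) ⧸
    (Ideal.span {(PowerSeries.C : Pol2 →+* PowerSeries Pol2) (MvPolynomial.X 0 * MvPolynomial.X 1) - PowerSeries.X})

instance : Algebra ℂ ARing := Ideal.Quotient.algebra ℂ
instance : Module ℂ ARing := Algebra.toModule

/-- The element `u` of `A_R`. -/
def uA : ARing := Ideal.Quotient.mk _ ((PowerSeries.C : Pol2 →+* PowerSeries Pol2) (MvPolynomial.X 0))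

/-- The element `t` of `A_R`. -/
def tA : ARing := Ideal.Quotient.mk _ ((PowerSeries.C : Pol2 →+* PowerSeries Pol2) (MvPolynomial.X 1))

/-- The element `q` of `A_R`. -/
def qA : ARing := Ideal.Quotient.mk _ (PowerSeries.X : PowerSeries Pol2)

/-!
The `a`-power torsion `N₀` of a module with a connection is stable under the connection, and in
a Noetherian module it is killed by a single power `a ^ (n + 1)`. Differentiating
`a ^ (n + 1) • x = 0` for `x ∈ N₀`, where also `a ^ (n + 1) • DN x = 0`, gives
`(n + 1) • a ^ n • D a • x = 0`; when `D a ≡ 1 mod a` and `n + 1` is invertible this says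
`a ^ n • x = 0`, so the exponent descends to `0` and `N₀ = 0`.
-/

open Submodule

namespace Submodule

variable {R M : Type*} [CommSemiring R] [AddCommMonoid M] [Module R M]

theorem mem_torsion'_powers_iff (a : R) (x : M) :
    x ∈ torsion' R M (Submonoid.powers a) ↔ ∃ n : ℕ, a ^ n • x = 0 := by
  simp [mem_torsion'_iff, Submonoid.mem_powers_iff]

theorem exists_torsion'_powers_le_torsionBy_pow [IsNoetherian R M] (a : R) :
    ∃ n : ℕ, torsion' R M (Submonoid.powers a) ≤ torsionBy R M (a ^ n) := by
  let chain : ℕ →o Submodule R M :=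
    ⟨fun n => torsionBy R M (a ^ n), fun _ _ h => torsionBy_le_torsionBy_of_dvd _ _ (pow_dvd_pow a h)⟩
  obtain ⟨n, hn⟩ := monotone_stabilizes_iff_noetherian.mpr ‹_› chain
  refine ⟨n, fun x hx => ?_⟩
  obtain ⟨m, hm⟩ := (mem_torsion'_powers_iff a x).mp hx
  have hx : x ∈ chain (max n m) := chain.monotone (le_max_right n m) hm
  rwa [← hn _ (le_max_left n m)] at hx

end Submodule

theorem Derivation.leibniz_pow_succ {R A : Type*} [CommSemiring R] [CommSemiring A] [Algebra R A]
    (D : Derivation R A A) (a : A) (n : ℕ) : D (a ^ (n + 1)) = ((n + 1 : ℕ) * D a) * a ^ n := by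
  rw [Derivation.leibniz_pow, Nat.add_sub_cancel, nsmul_eq_mul, smul_eq_mul]
  ring

def IsConnection {R A N : Type*} [CommSemiring R] [CommSemiring A] [Algebra R A]
    [AddCommMonoid N] [Module A N] (D : Derivation R A A) (DN : N →+ N) : Prop :=
  ∀ (f : A) (x : N), DN (f • x) = D f • x + f • DN x

namespace IsConnection

variable {R A N : Type*} [CommSemiring R] [CommRing A] [Algebra R A]
  [AddCommGroup N] [Module A N] {D : Derivation R A A} {DN : N →+ N}

theorem derivation_smul_add_smul_map_eq_zero (hDN : IsConnection D DN) {f : A} {x : N}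
    (h : f • x = 0) : D f • x + f • DN x = 0 := by
  rw [← hDN, h, map_zero]

theorem pow_succ_smul_map_eq_zero (hDN : IsConnection D DN) {a : A} {x : N} {n : ℕ}
    (hx : a ^ n • x = 0) : a ^ (n + 1) • DN x = 0 := by
  have hx' : a ^ (n + 1) • x = 0 := by rw [pow_succ', mul_smul, hx, smul_zero]
  have hD : D (a ^ (n + 1)) • x = 0 := by rw [D.leibniz_pow_succ, mul_smul, hx, smul_zero]
  simpa only [hD, zero_add] using hDN.derivation_smul_add_smul_map_eq_zero hx'

theorem map_mem_torsion'_powers (hDN : IsConnection D DN) {a : A} {x : N}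
    (hx : x ∈ torsion' A N (Submonoid.powers a)) : DN x ∈ torsion' A N (Submonoid.powers a) := by
  obtain ⟨n, hn⟩ := (mem_torsion'_powers_iff a x).mp hx
  exact (mem_torsion'_powers_iff a _).mpr ⟨n + 1, hDN.pow_succ_smul_map_eq_zero hn⟩

theorem torsion'_powers_le_torsionBy_pow_of_succ (K : Type*) [Field K] [CharZero K] [Algebra K A]
    (hDN : IsConnection D DN) {a : A} (hDa : a ∣ D a - 1) {n : ℕ}
    (h : torsion' A N (Submonoid.powers a) ≤ torsionBy A N (a ^ (n + 1))) :
    torsion' A N (Submonoid.powers a) ≤ torsionBy A N (a ^ n) := by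
  obtain ⟨b, hb⟩ := hDa
  intro y hy
  have hay : a ^ (n + 1) • y = 0 := h hy
  have haDy : a ^ (n + 1) • DN y = 0 := h (hDN.map_mem_torsion'_powers hy)
  have hDy : D (a ^ (n + 1)) • y = 0 := by
    simpa only [haDy, add_zero] using hDN.derivation_smul_add_smul_map_eq_zero hay
  have hDpow : D (a ^ (n + 1)) = ((n + 1 : ℕ) : A) * a ^ n + ((n + 1 : ℕ) * b) * a ^ (n + 1) := by
    rw [D.leibniz_pow_succ, eq_add_of_sub_eq' hb]
    ring
  have key : ((n + 1 : ℕ) : A) • a ^ n • y = 0 := by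
    rwa [hDpow, add_smul, mul_smul _ (a ^ (n + 1)), hay, smul_zero, add_zero, mul_smul] at hDy
  have hunit : IsUnit ((n + 1 : ℕ) : A) := by
    simpa using ((Nat.cast_ne_zero (R := K)).mpr n.succ_ne_zero).isUnit.map (algebraMap K A)
  exact (mem_torsionBy_iff _ _).mpr (hunit.smul_eq_zero.mp key)

theorem torsion'_powers_eq_bot (K : Type*) [Field K] [CharZero K] [Algebra K A] [IsNoetherian A N]
    (hDN : IsConnection D DN) {a : A} (hDa : a ∣ D a - 1) :
    torsion' A N (Submonoid.powers a) = ⊥ := by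
  obtain ⟨n, hn⟩ := exists_torsion'_powers_le_torsionBy_pow (M := N) a
  induction n with
  | zero => simpa using hn
  | succ n ih => exact ih (hDN.torsion'_powers_le_torsionBy_pow_of_succ K hDa hn)

end IsConnection

theorem stmt17_general (DA : Derivation ℂ ARing ARing) (hDt : DA tA = tA)
    (N : Type) [AddCommGroup N] [Module ARing N] [Module.Finite ARing N]
    (DN : N →+ N) (hDN : ∀ (f : ARing) (x : N), DN (f • x) = DA f • x + f • DN x) :
    (∀ x y : N, x ∈ {x : N | ∃ n : ℕ, (tA - 1) ^ n • x = 0} →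
        y ∈ {x : N | ∃ n : ℕ, (tA - 1) ^ n • x = 0} →
        x + y ∈ {x : N | ∃ n : ℕ, (tA - 1) ^ n • x = 0}) ∧
    (∀ (a : ARing) (x : N), x ∈ {x : N | ∃ n : ℕ, (tA - 1) ^ n • x = 0} →
        a • x ∈ {x : N | ∃ n : ℕ, (tA - 1) ^ n • x = 0}) ∧
    (∀ x : N, x ∈ {x : N | ∃ n : ℕ, (tA - 1) ^ n • x = 0} →
        DN x ∈ {x : N | ∃ n : ℕ, (tA - 1) ^ n • x = 0}) ∧
    (∀ x : N, x ∈ {x : N | ∃ n : ℕ, (tA - 1) ^ n • x = 0} → x = 0) := by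
  have hconn : IsConnection DA DN := hDN
  have hDa : tA - 1 ∣ DA (tA - 1) - 1 := ⟨1, by simp [hDt]⟩
  have hN₀ := hconn.torsion'_powers_eq_bot ℂ hDa
  simp only [Set.mem_ofPred_eq, ← mem_torsion'_powers_iff]
  exact ⟨fun _ _ => add_mem, fun a _ => smul_mem _ a, fun _ => hconn.map_mem_torsion'_powers,
    fun x hx => (mem_bot ARing).mp (hN₀ ▸ hx)⟩

/-- Let `N` be a finitely generated module over `A_R = ℂ[u,t][[q]]/(ut-q)` with a connection
`D_N` along `t∂t - u∂u`, and let `N₀ = {x ∈ N : (t-1)^n x = 0 for some n}` be the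
`(t-1)`-power-torsion subset.  Then `N₀` is a submodule, it is invariant under `D_N`, and
`N₀ = 0`. -/
theorem stmt17 (DA : Derivation ℂ ARing ARing) (hDu : DA uA = -uA) (hDt : DA tA = tA)
    (N : Type) [AddCommGroup N] [Module ARing N] [Module.Finite ARing N]
    (DN : N →+ N) (hDN : ∀ (f : ARing) (x : N), DN (f • x) = DA f • x + f • DN x) :
    (∀ x y : N, x ∈ {x : N | ∃ n : ℕ, (tA - 1) ^ n • x = 0} →
        y ∈ {x : N | ∃ n : ℕ, (tA - 1) ^ n • x = 0} →
        x + y ∈ {x : N | ∃ n : ℕ, (tA - 1) ^ n • x = 0}) ∧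
    (∀ (a : ARing) (x : N), x ∈ {x : N | ∃ n : ℕ, (tA - 1) ^ n • x = 0} →
        a • x ∈ {x : N | ∃ n : ℕ, (tA - 1) ^ n • x = 0}) ∧
    (∀ x : N, x ∈ {x : N | ∃ n : ℕ, (tA - 1) ^ n • x = 0} →
        DN x ∈ {x : N | ∃ n : ℕ, (tA - 1) ^ n • x = 0}) ∧
    (∀ x : N, x ∈ {x : N | ∃ n : ℕ, (tA - 1) ^ n • x = 0} → x = 0) :=
  stmt17_general DA hDt N DN hDN

end
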